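/- Let T be a T_7-free tournament and let z be any vertex of T. Then the set V_3(z) induces a T_5-free subtournament and is 2-in-dominated by V_2(z). -/

import Mathlib

/-- A tournament on vertex set `V`: an irreflexive relation such that for
all distinct `u, v` exactly one of `u→v` and `v→u` holds. -/
def IsTournament {V : Type*} (r : V → V → Prop) : Prop :=
  (∀ v, ¬ r v v) ∧ ∀ u v : V, u ≠ v → (r u v ↔ ¬ r v u)

/-- The restriction of `r` to the vertex set `X` is a transitive relation. -/
def TransOn {V : Type*} (r : V → V → Prop) (X : Finset V) : Prop :=
  ∀ x ∈ X, ∀ y ∈ X, ∀ z ∈ X, r x y → r y z → r x z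

/-- There is a directed walk of length `k` from `v` to `z`. -/
def ReachLen {V : Type*} (r : V → V → Prop) (v z : V) (k : ℕ) : Prop :=
  ∃ f : Fin (k + 1) → V, f 0 = v ∧ f (Fin.last k) = z ∧
    ∀ i : Fin k, r (f i.castSucc) (f i.succ)

/-- The layer `V_ℓ(z)`: vertices whose shortest directed path to `z` has length
exactly `ℓ - 1`. -/
def layer {V : Type*} (r : V → V → Prop) (z : V) (ℓ : ℕ) : Set V :=
  {v | ReachLen r v z (ℓ - 1) ∧ ∀ m < ℓ - 1, ¬ ReachLen r v z m}

/-- `Z` 2-in-dominates `S`: some subset `Z' ⊆ Z` with `|Z'| ≤ 2` in-dominates `S`,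
i.e. every `s ∈ S` has an arc `s → z'` to some `z' ∈ Z'`. -/
def TwoInDominates {V : Type*} (r : V → V → Prop) (Z S : Set V) : Prop :=
  ∃ Z' : Set V, Z' ⊆ Z ∧ Z'.ncard ≤ 2 ∧ ∀ s ∈ S, ∃ z' ∈ Z', r s z'

/-- The set `A` induces a `T_5`-free subtournament: every 5-element subset of `A`
contains a 4-element transitive subset. -/
def T5FreeOn {V : Type*} (r : V → V → Prop) (A : Set V) : Prop :=
  ∀ X : Finset V, (↑X : Set V) ⊆ A → X.card = 5 →
    ∃ Y ⊆ X, Y.card = 4 ∧ TransOn r Y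

/-- The tournament is `T_7`-free: every 7-element vertex subset contains a 5-element
transitive subset. -/
def T7Free {V : Type*} (r : V → V → Prop) : Prop :=
  ∀ Q : Finset V, Q.card = 7 → ∃ X ⊆ Q, X.card = 5 ∧ TransOn r X

/-! In a `T_7`-free tournament there are no seven vertices `z, a₁, w₁, a₂, w₂, a₃, w₃`
with `z → aᵢ → wᵢ → z` and `wᵢ → aⱼ` for `i ≠ j`: any five of them contain the 3-cycle `z aᵢ wᵢ`
or the 4-cycle `aᵢ wᵢ aⱼ wⱼ`, so none is transitive.

Choose `w₁, w₂ ∈ V₂(z)` leaving as few vertices of `V₃(z)` as possible beating neither of them. If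
some `s` is left, it beats some `w₃ ∈ V₂(z)`, and minimality for the pairs `(w₁, w₃)` and
`(w₂, w₃)` produces exactly such a forbidden configuration; so `{w₁, w₂}` in-dominates `V₃(z)`.

If `w → z` and five vertices `X ⊆ V₃(z)` have no transitive 4-subset, a transitive 5-subset of
`X ∪ {z, w}` consists of `z`, `w` and three vertices of `X`, all beaten by `w`. So at most two
vertices of `X` beat `w`, and the two in-dominating vertices account for at most four of `X`. -/

open Finset

section

variable {V : Type*} {r : V → V → Prop}

namespace IsTournament

variable (hT : IsTournament r) {u v : V}
include hT

lemma irrefl (v : V) : ¬ r v v := hT.1 v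

lemma ne_of_rel (h : r u v) : u ≠ v := fun e => hT.irrefl v (e ▸ h)

lemma asymm (h : r u v) : ¬ r v u := (hT.2 u v (hT.ne_of_rel h)).mp h

lemma rel_of_not_rel (hne : u ≠ v) (h : ¬ r u v) : r v u :=
  not_not.mp fun h' => h ((hT.2 u v hne).mpr h')

end IsTournament

namespace TransOn

variable {Y : Finset V} {x y u v : V}

lemma rel_self_of_cycle3 (hY : TransOn r Y) (hx : x ∈ Y) (hy : y ∈ Y) (hu : u ∈ Y)
    (hxy : r x y) (hyu : r y u) (hux : r u x) : r x x :=
  hY x hx u hu x hx (hY x hx y hy u hu hxy hyu) hux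

lemma rel_self_of_cycle4 (hY : TransOn r Y) (hx : x ∈ Y) (hy : y ∈ Y) (hu : u ∈ Y) (hv : v ∈ Y)
    (hxy : r x y) (hyu : r y u) (huv : r u v) (hvx : r v x) : r x x :=
  hY.rel_self_of_cycle3 hx hu hv (hY x hx y hy u hu hxy hyu) huv hvx

lemma mono {Y' : Finset V} (hY : TransOn r Y) (h : Y' ⊆ Y) : TransOn r Y' :=
  fun x hx y hy u hu => hY x (h hx) y (h hy) u (h hu)

end TransOn

lemma reachLen_zero {v z : V} : ReachLen r v z 0 ↔ v = z :=
  ⟨fun ⟨_, h0, hl, _⟩ => h0 ▸ hl ▸ rfl, fun h => ⟨fun _ => v, rfl, h, nofun⟩⟩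

lemma reachLen_one {v z : V} : ReachLen r v z 1 ↔ r v z := by
  constructor
  · rintro ⟨f, rfl, rfl, hf⟩
    exact hf 0
  · intro h
    exact ⟨![v, z], rfl, rfl, fun i => by fin_cases i; exact h⟩

lemma reachLen_two {v z : V} : ReachLen r v z 2 ↔ ∃ w, r v w ∧ r w z := by
  constructor
  · rintro ⟨f, rfl, rfl, hf⟩
    exact ⟨f 1, hf 0, hf 1⟩
  · rintro ⟨w, hvw, hwz⟩
    exact ⟨![v, w, z], rfl, rfl, fun i => by fin_cases i <;> assumption⟩

lemma layer_two (hT : IsTournament r) (z : V) : layer r z 2 = {w | r w z} := by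
  ext w
  refine ⟨fun hw => reachLen_one.mp hw.1, fun h => ⟨reachLen_one.mpr h, fun m hm => ?_⟩⟩
  obtain rfl : m = 0 := by omega
  exact fun h0 => hT.ne_of_rel h (reachLen_zero.mp h0)

lemma rel_of_mem_layer_three (hT : IsTournament r) {z s : V} (hs : s ∈ layer r z 3) :
    r z s ∧ ∃ w, r s w ∧ r w z := by
  obtain ⟨hs2, hmin⟩ := hs
  have hne : s ≠ z := fun e => hmin 0 (by norm_num) (reachLen_zero.mpr e)
  have hsz : ¬ r s z := fun e => hmin 1 (by norm_num) (reachLen_one.mpr e)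
  exact ⟨hT.rel_of_not_rel hne hsz, reachLen_two.mp hs2⟩

lemma Finset.subset_or_card_inter_le_one [DecidableEq V] {Y P : Finset V} (hP : #P ≤ 2) :
    P ⊆ Y ∨ #(Y ∩ P) ≤ 1 := by
  by_contra! h
  have hYP : Y ∩ P = P := eq_of_subset_of_card_le inter_subset_right (by omega)
  exact h.1 (hYP ▸ inter_subset_left)

lemma Finset.card_le_card_inter_add_card_inter [DecidableEq V] {Y A B : Finset V}
    (h : Y ⊆ A ∪ B) : #Y ≤ #(Y ∩ A) + #(Y ∩ B) := by
  grw [← card_union_le, ← inter_union_distrib_left, inter_eq_left.mpr h]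

lemma Finset.pigeonhole_three_pairs [DecidableEq V] {Y P₁ P₂ P₃ : Finset V} {x : V}
    (hY : Y ⊆ insert x (P₁ ∪ P₂ ∪ P₃)) (h5 : 5 ≤ #Y)
    (h₁ : #P₁ ≤ 2) (h₂ : #P₂ ≤ 2) (h₃ : #P₃ ≤ 2) :
    (x ∈ Y ∧ (P₁ ⊆ Y ∨ P₂ ⊆ Y ∨ P₃ ⊆ Y)) ∨
      (P₁ ⊆ Y ∧ P₂ ⊆ Y) ∨ (P₁ ⊆ Y ∧ P₃ ⊆ Y) ∨ (P₂ ⊆ Y ∧ P₃ ⊆ Y) := by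
  have hcard : #Y ≤ #(Y ∩ {x}) + #(Y ∩ P₁) + #(Y ∩ P₂) + #(Y ∩ P₃) := by
    rw [insert_eq, ← union_assoc, ← union_assoc] at hY
    calc #Y = #(Y ∩ ({x} ∪ P₁ ∪ P₂ ∪ P₃)) := by rw [inter_eq_left.mpr hY]
      _ = #((Y ∩ {x}) ∪ (Y ∩ P₁) ∪ (Y ∩ P₂) ∪ (Y ∩ P₃)) := by simp only [inter_union_distrib_left]
      _ ≤ _ := by grw [card_union_le, card_union_le, card_union_le]
  have hx : x ∈ Y ∨ #(Y ∩ {x}) = 0 := by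
    by_cases hx : x ∈ Y <;> simp [hx]
  have : #(Y ∩ {x}) ≤ 1 := (card_le_card inter_subset_right).trans (card_singleton x).le
  have : #(Y ∩ P₁) ≤ 2 := (card_le_card inter_subset_right).trans h₁
  have : #(Y ∩ P₂) ≤ 2 := (card_le_card inter_subset_right).trans h₂
  have : #(Y ∩ P₃) ≤ 2 := (card_le_card inter_subset_right).trans h₃
  rcases hx with hx | hx <;>
  rcases subset_or_card_inter_le_one (Y := Y) h₁ with h₁ | h₁ <;>
  rcases subset_or_card_inter_le_one (Y := Y) h₂ with h₂ | h₂ <;>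
  rcases subset_or_card_inter_le_one (Y := Y) h₃ with h₃ | h₃ <;>
  first | tauto | omega

lemma T7Free.false_of_crossedTriple (hT : IsTournament r) (h7 : T7Free r)
    {z a b c wa wb wc : V} (hza : r z a) (hzb : r z b) (hzc : r z c)
    (hawa : r a wa) (hbwb : r b wb) (hcwc : r c wc)
    (hwaz : r wa z) (hwbz : r wb z) (hwcz : r wc z)
    (hwab : r wa b) (hwac : r wa c) (hwba : r wb a) (hwbc : r wb c)
    (hwca : r wc a) (hwcb : r wc b) : False := by
  classical
  have hQ : #(insert z ({a, wa} ∪ {b, wb} ∪ {c, wc})) = 7 := by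
    rw [card_insert_of_notMem, card_union_of_disjoint, card_union_of_disjoint,
      card_pair, card_pair, card_pair]
    all_goals simp
    all_goals grind [hT.ne_of_rel, hT.asymm]
  obtain ⟨Y, hYQ, hY5, hYt⟩ := h7 _ hQ
  have hmem {x y : V} (h : ({x, y} : Finset V) ⊆ Y) : x ∈ Y ∧ y ∈ Y := by
    simpa [insert_subset_iff] using h
  rcases pigeonhole_three_pairs hYQ hY5.ge card_le_two card_le_two card_le_two with
    ⟨hz, h | h | h⟩ | ⟨h, h'⟩ | ⟨h, h'⟩ | ⟨h, h'⟩
  · obtain ⟨ha, hwa⟩ := hmem h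
    exact hT.irrefl z (hYt.rel_self_of_cycle3 hz ha hwa hza hawa hwaz)
  · obtain ⟨hb, hwb⟩ := hmem h
    exact hT.irrefl z (hYt.rel_self_of_cycle3 hz hb hwb hzb hbwb hwbz)
  · obtain ⟨hc, hwc⟩ := hmem h
    exact hT.irrefl z (hYt.rel_self_of_cycle3 hz hc hwc hzc hcwc hwcz)
  · obtain ⟨ha, hwa⟩ := hmem h
    obtain ⟨hb, hwb⟩ := hmem h'
    exact hT.irrefl a (hYt.rel_self_of_cycle4 ha hwa hb hwb hawa hwab hbwb hwba)
  · obtain ⟨ha, hwa⟩ := hmem h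
    obtain ⟨hc, hwc⟩ := hmem h'
    exact hT.irrefl a (hYt.rel_self_of_cycle4 ha hwa hc hwc hawa hwac hcwc hwca)
  · obtain ⟨hb, hwb⟩ := hmem h
    obtain ⟨hc, hwc⟩ := hmem h'
    exact hT.irrefl b (hYt.rel_self_of_cycle4 hb hwb hc hwc hbwb hwbc hcwc hwcb)

lemma T7Free.card_le_two_of_forall_rel (hT : IsTournament r) (h7 : T7Free r) {z w : V}
    {X A : Finset V} (hwz : r w z) (hzX : ∀ x ∈ X, r z x) (hX : #X = 5)
    (hno : ∀ Y ⊆ X, #Y = 4 → ¬ TransOn r Y) (hAX : A ⊆ X) (hAw : ∀ x ∈ A, r x w) :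
    #A ≤ 2 := by
  classical
  have hzX' : z ∉ X := fun h => hT.irrefl z (hzX z h)
  have hwX : w ∉ X := fun h => hT.asymm hwz (hzX w h)
  have hQ : #(insert z (insert w X)) = 7 := by
    rw [card_insert_of_notMem (by simp [(hT.ne_of_rel hwz).symm, hzX']),
      card_insert_of_notMem hwX, hX]
  obtain ⟨Y, hYQ, hY5, hYt⟩ := h7 _ hQ
  have hYX : #(Y ∩ X) ≤ 3 := by
    by_contra! h
    obtain ⟨Y', hY', hY'4⟩ := exists_subset_card_eq (show 4 ≤ #(Y ∩ X) by omega)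
    exact hno Y' (hY'.trans inter_subset_right) hY'4 (hYt.mono (hY'.trans inter_subset_left))
  have hsplit : #Y ≤ #(Y ∩ {z, w}) + #(Y ∩ X) :=
    card_le_card_inter_add_card_inter (by simpa [← insert_eq] using hYQ)
  have hzw : #(Y ∩ {z, w}) ≤ 2 := (card_le_card inter_subset_right).trans card_le_two
  obtain ⟨hzY, hwY⟩ : z ∈ Y ∧ w ∈ Y := by
    rcases subset_or_card_inter_le_one (Y := Y) (card_le_two (a := z) (b := w)) with h | h
    · exact ⟨h (by simp), h (by simp)⟩
    · omega
  -- `w → z → x` inside the transitive set `Y`, so `w` beats all of `Y ∩ X`, which thus misses `A`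
  have hdisj : Disjoint A (Y ∩ X) := by
    refine disjoint_left.mpr fun x hxA hxYX => hT.asymm (hAw x hxA) ?_
    obtain ⟨hxY, hxX⟩ := mem_inter.mp hxYX
    exact hYt w hwY z hzY x hxY hwz (hzX x hxX)
  have hAYX : #A + #(Y ∩ X) ≤ #X := by
    rw [← card_union_of_disjoint hdisj]
    exact card_le_card (union_subset hAX inter_subset_right)
  omega

lemma T7Free.t5FreeOn_of_twoInDominates [Finite V] (hT : IsTournament r) (h7 : T7Free r)
    {z : V} {S : Set V} (hzS : ∀ s ∈ S, r z s) (hdom : TwoInDominates r {w | r w z} S) :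
    T5FreeOn r S := by
  classical
  intro X hXS hX
  by_contra! hno
  obtain ⟨Z', hZ', hZ'2, hcov⟩ := hdom
  set D := (Set.toFinite Z').toFinset
  have hD : #D ≤ 2 := by rwa [← Set.ncard_eq_toFinset_card]
  have hXD : X ⊆ D.biUnion fun w => X.filter (r · w) := by
    intro x hx
    obtain ⟨w, hw, hxw⟩ := hcov x (hXS hx)
    exact mem_biUnion.mpr ⟨w, by simpa [D] using hw, mem_filter.mpr ⟨hx, hxw⟩⟩
  have : #X ≤ #D * 2 := (card_le_card hXD).trans <| card_biUnion_le_card_mul _ _ _ fun w hw =>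
    h7.card_le_two_of_forall_rel hT (hZ' (by simpa [D] using hw)) (fun x hx => hzS x (hXS hx))
      hX hno (filter_subset _ _) fun x hx => (mem_filter.mp hx).2
  omega

lemma T7Free.exists_inDominating_pair (hT : IsTournament r) (h7 : T7Free r) {z : V}
    {S W : Finset V} (hS : ∀ s ∈ S, r z s ∧ ∃ w ∈ W, r s w) (hW : ∀ w ∈ W, r w z)
    (hW₀ : W.Nonempty) : ∃ w₁ ∈ W, ∃ w₂ ∈ W, ∀ s ∈ S, r s w₁ ∨ r s w₂ := by
  classical
  have hflip : ∀ x ∈ S, ∀ w ∈ W, ¬ r x w → r w x := fun x hx w hw =>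
    hT.rel_of_not_rel fun e => hT.asymm (hS x hx).1 (e ▸ hW w hw)
  let U (p : V × V) : Finset V := S.filter fun s => ¬ r s p.1 ∧ ¬ r s p.2
  obtain ⟨⟨w₁, w₂⟩, hp, hmin⟩ := exists_min_image (W ×ˢ W) (fun p => #(U p)) (hW₀.product hW₀)
  obtain ⟨hw₁, hw₂⟩ := mem_product.mp hp
  refine ⟨w₁, hw₁, w₂, hw₂, ?_⟩
  by_contra! ⟨s, hs, hsw₁, hsw₂⟩
  obtain ⟨hzs, w₃, hw₃, hsw₃⟩ := hS s hs
  have hexchange : ∀ p ∈ W ×ˢ W, s ∉ U p → ∃ t ∈ U p, t ∉ U (w₁, w₂) := by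
    intro p hp hsp
    by_contra! hsub
    have hsub' : U p ⊆ (U (w₁, w₂)).erase s := fun t ht =>
      mem_erase.mpr ⟨fun e => hsp (e ▸ ht), hsub t ht⟩
    have := card_erase_lt_of_mem (show s ∈ U (w₁, w₂) by simp [U, hs, hsw₁, hsw₂])
    have := card_le_card hsub'
    have := hmin p hp
    omega
  obtain ⟨t, ht, ht₁₂⟩ := hexchange (w₁, w₃) (mem_product.mpr ⟨hw₁, hw₃⟩) (by simp [U, hsw₃])
  obtain ⟨t', ht', ht'₁₂⟩ := hexchange (w₂, w₃) (mem_product.mpr ⟨hw₂, hw₃⟩) (by simp [U, hsw₃])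
  simp only [U, mem_filter] at ht ht₁₂ ht' ht'₁₂
  have htw₂ : r t w₂ := by tauto
  have ht'w₁ : r t' w₁ := by tauto
  exact h7.false_of_crossedTriple hT hzs (hS t ht.1).1 (hS t' ht'.1).1 hsw₃ htw₂ ht'w₁
    (hW w₃ hw₃) (hW w₂ hw₂) (hW w₁ hw₁)
    (hflip t ht.1 w₃ hw₃ ht.2.2) (hflip t' ht'.1 w₃ hw₃ ht'.2.2) (hflip s hs w₂ hw₂ hsw₂)
    (hflip t' ht'.1 w₂ hw₂ ht'.2.1) (hflip s hs w₁ hw₁ hsw₁) (hflip t ht.1 w₁ hw₁ ht.2.1)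

lemma twoInDominates_layer_two_layer_three [Fintype V] (hT : IsTournament r) (h7 : T7Free r)
    (z : V) : TwoInDominates r (layer r z 2) (layer r z 3) := by
  classical
  rw [layer_two hT]
  set W := univ.filter (r · z)
  have hS : ∀ s ∈ univ.filter (· ∈ layer r z 3), r z s ∧ ∃ w ∈ W, r s w := by
    intro s hs
    obtain ⟨hzs, w, hsw, hwz⟩ := rel_of_mem_layer_three hT (mem_filter.mp hs).2
    exact ⟨hzs, w, mem_filter.mpr ⟨mem_univ w, hwz⟩, hsw⟩
  rcases W.eq_empty_or_nonempty with hW₀ | hW₀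
  · refine ⟨∅, Set.empty_subset _, by simp, fun s hs => ?_⟩
    obtain ⟨w, hw, -⟩ := (hS s (by simpa using hs)).2
    simp [hW₀] at hw
  obtain ⟨w₁, hw₁, w₂, hw₂, hdom⟩ := h7.exists_inDominating_pair hT hS (by simp [W]) hW₀
  refine ⟨{w₁, w₂}, ?_, (Set.ncard_insert_le _ _).trans (by simp), fun s hs => ?_⟩
  · simp only [W, mem_filter] at hw₁ hw₂
    simp [Set.insert_subset_iff, hw₁.2, hw₂.2]
  · rcases hdom s (by simpa using hs) with h | h
    exacts [⟨w₁, by simp, h⟩, ⟨w₂, by simp, h⟩]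

end

theorem stmt10_general {V : Type*} [Fintype V]
    (r : V → V → Prop) (hT : IsTournament r) (h7 : T7Free r) (z : V) :
    T5FreeOn r (layer r z 3) ∧ TwoInDominates r (layer r z 2) (layer r z 3) := by
  have hdom := twoInDominates_layer_two_layer_three hT h7 z
  refine ⟨h7.t5FreeOn_of_twoInDominates hT (fun s hs => (rel_of_mem_layer_three hT hs).1) ?_, hdom⟩
  rwa [← layer_two hT]

/-- in a `T_7`-free tournament, for every vertex `z`, the set `V_3(z)`
induces a `T_5`-free subtournament and is 2-in-dominated by `V_2(z)`. -/
theorem stmt10 {V : Type*} [Fintype V] [DecidableEq V]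
    (r : V → V → Prop) (hT : IsTournament r) (h7 : T7Free r) (z : V) :
    T5FreeOn r (layer r z 3) ∧ TwoInDominates r (layer r z 2) (layer r z 3) :=
  stmt10_general r hT h7 z
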